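/- Let $\ell_1 \neq \ell_2$ be positive reals and let $\kappa_1, \kappa_2, \tau_1, \tau_2 > 0$. Then there exists $h^* \in [0, \min\{\ell_1/4, \ell_2/4\}]$ such that $\frac{\cosh(\kappa_1 \ell_1 \sqrt{\ell_1 - 4h^*}/(2\sqrt{\ell_1}))}{2\kappa_1\tau_1^2\sinh(\kappa_1\ell_1/2)} \neq \frac{\cosh(\kappa_2 \ell_2 \sqrt{\ell_2 - 4h^*}/(2\sqrt{\ell_2}))}{2\kappa_2\tau_2^2\sinh(\kappa_2\ell_2/2)}$. -/

import Mathlib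

open Real Filter Set

lemma analyticAt_rlog {x : ℝ} (hx : 0 < x) : AnalyticAt ℝ Real.log x := by
  have h1 : AnalyticAt ℝ (fun y : ℝ => (Complex.log (Complex.ofRealCLM y)).re) x :=
    (Complex.reCLM.analyticAt _).comp
      (((analyticAt_clog (Complex.ofReal_mem_slitPlane.2 hx)).restrictScalars).comp
      (Complex.ofRealCLM.analyticAt x))
  refine h1.congr ?_
  filter_upwards [eventually_gt_nhds hx] with y hy
  simp [Complex.ofRealCLM_apply, Complex.log_ofReal_re]

lemma analyticAt_rsqrt {x : ℝ} (hx : 0 < x) : AnalyticAt ℝ Real.sqrt x := by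
  have h1 : AnalyticAt ℝ (fun y : ℝ => Real.exp (Real.log y * (1/2))) x :=
    ((analyticAt_rlog hx).mul analyticAt_const).rexp
  refine h1.congr ?_
  filter_upwards [eventually_gt_nhds hx] with y hy
  rw [Real.sqrt_eq_rpow, Real.rpow_def_of_pos hy]

lemma analyticAt_rcosh {x : ℝ} : AnalyticAt ℝ Real.cosh x := by
  have h1 : AnalyticAt ℝ (fun y : ℝ => (Real.exp y + Real.exp (-y)) / 2) x :=
    ((analyticAt_id.rexp).add ((analyticAt_id.neg).rexp)).div analyticAt_const (by norm_num)
  exact h1.congr (by filter_upwards with y; rw [Real.cosh_eq])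

lemma auxAnalytic (ℓ κ τ : ℝ) (hℓ : 0 < ℓ) (hκ : 0 < κ) (hτ : 0 < τ) :
    AnalyticOnNhd ℝ (fun h : ℝ => Real.cosh (κ * ℓ * Real.sqrt (ℓ - 4 * h) / (2 * Real.sqrt ℓ)) /
      (2 * κ * τ ^ 2 * Real.sinh (κ * ℓ / 2))) (Set.Iio (ℓ / 4)) := by
  intro x hx
  have hpos : 0 < ℓ - 4 * x := by rw [Set.mem_Iio] at hx; linarith
  have hsq : 0 < Real.sqrt ℓ := Real.sqrt_pos.2 hℓ
  have hsinh : 0 < Real.sinh (κ * ℓ / 2) := by positivity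
  have h1 : AnalyticAt ℝ (fun h : ℝ => ℓ - 4 * h) x :=
    analyticAt_const.sub (analyticAt_const.mul analyticAt_id)
  have h2 : AnalyticAt ℝ (fun h : ℝ => Real.sqrt (ℓ - 4 * h)) x :=
    AnalyticAt.comp (g := Real.sqrt) (f := fun h : ℝ => ℓ - 4 * h) (analyticAt_rsqrt hpos) h1
  have h3 : AnalyticAt ℝ (fun h : ℝ => κ * ℓ * Real.sqrt (ℓ - 4 * h) / (2 * Real.sqrt ℓ)) x :=
    (analyticAt_const.mul h2).div analyticAt_const (by positivity)
  exact (analyticAt_rcosh.comp h3).div analyticAt_const (by positivity)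

/-- For two cycles of different lengths `ℓ₁ ≠ ℓ₂`, there exists a resistance distance
`h* ∈ [0, min(ℓ₁/4, ℓ₂/4)]` at which the two isotropic-Markov covariances differ. -/
theorem stmt1 (ℓ₁ ℓ₂ κ₁ κ₂ τ₁ τ₂ : ℝ) (hℓ₁ : 0 < ℓ₁) (hℓ₂ : 0 < ℓ₂) (hne : ℓ₁ ≠ ℓ₂)
    (hκ₁ : 0 < κ₁) (hκ₂ : 0 < κ₂) (hτ₁ : 0 < τ₁) (hτ₂ : 0 < τ₂) :
    ∃ h ∈ Set.Icc (0 : ℝ) (min (ℓ₁ / 4) (ℓ₂ / 4)),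
      Real.cosh (κ₁ * ℓ₁ * Real.sqrt (ℓ₁ - 4 * h) / (2 * Real.sqrt ℓ₁)) /
          (2 * κ₁ * τ₁ ^ 2 * Real.sinh (κ₁ * ℓ₁ / 2)) ≠
        Real.cosh (κ₂ * ℓ₂ * Real.sqrt (ℓ₂ - 4 * h) / (2 * Real.sqrt ℓ₂)) /
          (2 * κ₂ * τ₂ ^ 2 * Real.sinh (κ₂ * ℓ₂ / 2)) := by
  by_contra hcon
  push_neg at hcon
  have hM0 : 0 < min (ℓ₁ / 4) (ℓ₂ / 4) := lt_min (by linarith) (by linarith)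
  set M := min (ℓ₁ / 4) (ℓ₂ / 4) with hMdef
  have hsq₁ : 0 < Real.sqrt ℓ₁ := Real.sqrt_pos.2 hℓ₁
  have hsq₂ : 0 < Real.sqrt ℓ₂ := Real.sqrt_pos.2 hℓ₂
  set b₁ := κ₁ * ℓ₁ / (2 * Real.sqrt ℓ₁) with hb₁
  set b₂ := κ₂ * ℓ₂ / (2 * Real.sqrt ℓ₂) with hb₂
  have hb₁0 : 0 < b₁ := by rw [hb₁]; positivity
  have hb₂0 : 0 < b₂ := by rw [hb₂]; positivity
  have hsh₁ : 0 < Real.sinh (κ₁ * ℓ₁ / 2) := by positivity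
  have hsh₂ : 0 < Real.sinh (κ₂ * ℓ₂ / 2) := by positivity
  set D₁ := 2 * κ₁ * τ₁ ^ 2 * Real.sinh (κ₁ * ℓ₁ / 2) with hD₁
  set D₂ := 2 * κ₂ * τ₂ ^ 2 * Real.sinh (κ₂ * ℓ₂ / 2) with hD₂
  have hD₁0 : 0 < D₁ := by rw [hD₁]; positivity
  have hD₂0 : 0 < D₂ := by rw [hD₂]; positivity
  clear_value M b₁ b₂ D₁ D₂
  set F : ℝ → ℝ :=
    fun h => Real.cosh (κ₁ * ℓ₁ * Real.sqrt (ℓ₁ - 4 * h) / (2 * Real.sqrt ℓ₁)) / D₁ with hF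
  set G : ℝ → ℝ :=
    fun h => Real.cosh (κ₂ * ℓ₂ * Real.sqrt (ℓ₂ - 4 * h) / (2 * Real.sqrt ℓ₂)) / D₂ with hG
  -- analyticity
  have hFa : AnalyticOnNhd ℝ F (Set.Iio M) := by
    rw [hF, hD₁]
    exact (auxAnalytic ℓ₁ κ₁ τ₁ hℓ₁ hκ₁ hτ₁).mono (Set.Iio_subset_Iio (by rw [hMdef]; exact min_le_left _ _))
  have hGa : AnalyticOnNhd ℝ G (Set.Iio M) := by
    rw [hG, hD₂]
    exact (auxAnalytic ℓ₂ κ₂ τ₂ hℓ₂ hκ₂ hτ₂).mono (Set.Iio_subset_Iio (by rw [hMdef]; exact min_le_right _ _))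
  -- local equality near M/2
  have hev : F =ᶠ[nhds (M / 2)] G := by
    filter_upwards [Ioo_mem_nhds (by linarith : (0:ℝ) < M / 2) (by linarith : M / 2 < M)]
      with y hy
    exact hcon y ⟨hy.1.le, hy.2.le⟩
  -- identity theorem: equality on all of Iio M
  have hext : Set.EqOn F G (Set.Iio M) :=
    AnalyticOnNhd.eqOn_of_preconnected_of_eventuallyEq hFa hGa isPreconnected_Iio
      (show M / 2 ∈ Set.Iio M by simp [Set.mem_Iio]; linarith) hev
  -- reparametrize
  set u : ℝ → ℝ := fun x => b₁ * Real.sqrt (ℓ₁ + 4 * x) with hu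
  set v : ℝ → ℝ := fun x => b₂ * Real.sqrt (ℓ₂ + 4 * x) with hv
  have key : ∀ x : ℝ, 0 ≤ x → Real.cosh (u x) / D₁ = Real.cosh (v x) / D₂ := by
    intro x hx
    have h1 := hext (show -x ∈ Set.Iio M by rw [Set.mem_Iio]; linarith)
    simp only [hF, hG] at h1
    rw [show ℓ₁ - 4 * -x = ℓ₁ + 4 * x by ring, show ℓ₂ - 4 * -x = ℓ₂ + 4 * x by ring] at h1
    simp only [hu, hv]
    rw [show b₁ * Real.sqrt (ℓ₁ + 4 * x) =
          κ₁ * ℓ₁ * Real.sqrt (ℓ₁ + 4 * x) / (2 * Real.sqrt ℓ₁) by rw [hb₁]; ring,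
        show b₂ * Real.sqrt (ℓ₂ + 4 * x) =
          κ₂ * ℓ₂ * Real.sqrt (ℓ₂ + 4 * x) / (2 * Real.sqrt ℓ₂) by rw [hb₂]; ring]
    exact h1
  -- basic limits
  have hs_top : Tendsto Real.sqrt atTop atTop := by
    rw [show Real.sqrt = fun x : ℝ => x ^ (1/2 : ℝ) from funext fun x => Real.sqrt_eq_rpow x]
    exact tendsto_rpow_atTop (by norm_num)
  have hlin₁ : Tendsto (fun x : ℝ => ℓ₁ + 4 * x) atTop atTop :=
    tendsto_atTop_add_const_left _ _ ((tendsto_id (α := ℝ)).const_mul_atTop (by norm_num))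
  have hlin₂ : Tendsto (fun x : ℝ => ℓ₂ + 4 * x) atTop atTop :=
    tendsto_atTop_add_const_left _ _ ((tendsto_id (α := ℝ)).const_mul_atTop (by norm_num))
  have hu_top : Tendsto u atTop atTop := by
    rw [hu]; exact (hs_top.comp hlin₁).const_mul_atTop hb₁0
  have hv_top : Tendsto v atTop atTop := by
    rw [hv]; exact (hs_top.comp hlin₂).const_mul_atTop hb₂0
  have hεu : Tendsto (fun x => Real.exp (-(2 * u x))) atTop (nhds 0) :=
    Real.tendsto_exp_atBot.comp
      (tendsto_neg_atTop_atBot.comp (hu_top.const_mul_atTop (by norm_num)))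
  have hεv : Tendsto (fun x => Real.exp (-(2 * v x))) atTop (nhds 0) :=
    Real.tendsto_exp_atBot.comp
      (tendsto_neg_atTop_atBot.comp (hv_top.const_mul_atTop (by norm_num)))
  have hcosh : ∀ t : ℝ, Real.cosh t = Real.exp t * (1 + Real.exp (-(2 * t))) / 2 := by
    intro t
    rw [Real.cosh_eq, show -t = t + -(2 * t) by ring, Real.exp_add]
    ring
  have hexp : ∀ x : ℝ, 0 ≤ x → Real.exp (u x - v x) =
      D₁ / D₂ * ((1 + Real.exp (-(2 * v x))) / (1 + Real.exp (-(2 * u x)))) := by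
    intro x hx
    have h1 := key x hx
    rw [hcosh (u x), hcosh (v x)] at h1
    have e1 : (0:ℝ) < 1 + Real.exp (-(2 * u x)) := by positivity
    have e2 : (0:ℝ) < Real.exp (v x) := Real.exp_pos _
    rw [Real.exp_sub]
    field_simp at h1 ⊢
    linear_combination h1
  have hR : Tendsto (fun x => Real.exp (u x - v x)) atTop (nhds (D₁ / D₂)) := by
    have hlim : Tendsto
        (fun x => D₁ / D₂ * ((1 + Real.exp (-(2 * v x))) / (1 + Real.exp (-(2 * u x)))))
        atTop (nhds (D₁ / D₂ * ((1 + 0) / (1 + 0)))) :=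
      tendsto_const_nhds.mul (((tendsto_const_nhds.add hεv)).div
        (tendsto_const_nhds.add hεu) (by norm_num))
    rw [show D₁ / D₂ * ((1 + (0:ℝ)) / (1 + 0)) = D₁ / D₂ by norm_num] at hlim
    refine hlim.congr' ?_
    filter_upwards [eventually_ge_atTop 0] with x hx
    exact (hexp x hx).symm
  have ht : Tendsto (fun x => u x - v x) atTop (nhds (Real.log (D₁ / D₂))) := by
    have hc := (Real.continuousAt_log (show D₁ / D₂ ≠ 0 by positivity)).tendsto.comp hR
    simpa [Function.comp_def, Real.log_exp] using hc
  -- b₁ = b₂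
  have hquot : ∀ c ℓ : ℝ, 0 < c → 0 < ℓ →
      Tendsto (fun x => c * Real.sqrt (ℓ + 4 * x) / Real.sqrt x) atTop (nhds (2 * c)) := by
    intro c ℓ hc hℓ
    have ha : Tendsto (fun x : ℝ => ℓ / x + 4) atTop (nhds (0 + 4)) :=
      ((tendsto_id (α := ℝ)).const_div_atTop ℓ).add tendsto_const_nhds
    rw [show (0:ℝ) + 4 = 4 by norm_num] at ha
    have h4 : Real.sqrt 4 = 2 := by
      rw [show (4:ℝ) = 2 ^ 2 by norm_num, Real.sqrt_sq (by norm_num : (0:ℝ) ≤ 2)]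
    have hb : Tendsto (fun x : ℝ => c * Real.sqrt (ℓ / x + 4)) atTop (nhds (c * 2)) := by
      have h5 := ha.sqrt.const_mul c
      rwa [h4] at h5
    rw [show 2 * c = c * 2 by ring]
    refine hb.congr' ?_
    filter_upwards [eventually_gt_atTop 0] with x hx
    rw [show ℓ / x + 4 = (ℓ + 4 * x) / x by field_simp,
      Real.sqrt_div (by positivity), mul_div_assoc]
  have hbe : b₁ = b₂ := by
    have h0 : Tendsto (fun x => (u x - v x) / Real.sqrt x) atTop (nhds 0) :=
      ht.div_atTop hs_top
    have h1 : Tendsto (fun x => u x / Real.sqrt x) atTop (nhds (2 * b₁)) := by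
      rw [hu]; exact hquot b₁ ℓ₁ hb₁0 hℓ₁
    have h2 : Tendsto (fun x => v x / Real.sqrt x) atTop (nhds (2 * b₂)) := by
      rw [hv]; exact hquot b₂ ℓ₂ hb₂0 hℓ₂
    have h3 := h1.sub h2
    have h4 : Tendsto (fun x => u x / Real.sqrt x - v x / Real.sqrt x) atTop (nhds 0) :=
      h0.congr (fun x => sub_div _ _ _)
    have h5 := tendsto_nhds_unique h3 h4
    linarith
  -- u - v → 0, hence D₁ = D₂
  have hid : ∀ x : ℝ, 0 ≤ x → u x - v x =
      b₁ * (ℓ₁ - ℓ₂) / (Real.sqrt (ℓ₁ + 4 * x) + Real.sqrt (ℓ₂ + 4 * x)) := by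
    intro x hx
    have s1 : (0:ℝ) ≤ ℓ₁ + 4 * x := by linarith
    have s2 : (0:ℝ) ≤ ℓ₂ + 4 * x := by linarith
    have hden : 0 < Real.sqrt (ℓ₁ + 4 * x) + Real.sqrt (ℓ₂ + 4 * x) :=
      add_pos_of_pos_of_nonneg (Real.sqrt_pos.2 (by linarith)) (Real.sqrt_nonneg _)
    have e1 : Real.sqrt (ℓ₁ + 4 * x) ^ 2 = ℓ₁ + 4 * x := Real.sq_sqrt s1
    have e2 : Real.sqrt (ℓ₂ + 4 * x) ^ 2 = ℓ₂ + 4 * x := Real.sq_sqrt s2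
    simp only [hu, hv, ← hbe]
    rw [eq_div_iff hden.ne']
    linear_combination b₁ * e1 - b₁ * e2
  have hden_top : Tendsto (fun x : ℝ => Real.sqrt (ℓ₁ + 4 * x) + Real.sqrt (ℓ₂ + 4 * x))
      atTop atTop := by
    refine tendsto_atTop_mono (fun x => ?_) (hs_top.comp hlin₁)
    simp
  have h5 : Tendsto (fun x => u x - v x) atTop (nhds 0) := by
    refine ((tendsto_const_nhds (x := b₁ * (ℓ₁ - ℓ₂)) (f := atTop)).div_atTop hden_top).congr' ?_
    filter_upwards [eventually_ge_atTop 0] with x hx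
    exact (hid x hx).symm
  have hlog0 : Real.log (D₁ / D₂) = 0 := tendsto_nhds_unique ht h5
  have hDD : D₁ = D₂ := by
    rcases Real.log_eq_zero.1 hlog0 with h | h | h
    · exact absurd h (by positivity)
    · field_simp at h; linarith
    · nlinarith [div_pos hD₁0 hD₂0]
  -- conclude
  have hfin := key 0 le_rfl
  rw [hDD, div_eq_div_iff hD₂0.ne' hD₂0.ne'] at hfin
  have hc : Real.cosh (u 0) = Real.cosh (v 0) := mul_right_cancel₀ hD₂0.ne' hfin
  have hu0 : u 0 = b₁ * Real.sqrt ℓ₁ := by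
    simp only [hu]; norm_num
  have hv0 : v 0 = b₂ * Real.sqrt ℓ₂ := by
    simp only [hv]; norm_num
  rw [hu0, hv0] at hc
  have harg : b₁ * Real.sqrt ℓ₁ = b₂ * Real.sqrt ℓ₂ :=
    Real.cosh_strictMonoOn.injOn (Set.mem_Ici.2 (by positivity))
      (Set.mem_Ici.2 (by positivity)) hc
  rw [← hbe] at harg
  have hsqe : Real.sqrt ℓ₁ = Real.sqrt ℓ₂ := mul_left_cancel₀ hb₁0.ne' harg
  exact hne (by rw [← Real.sq_sqrt hℓ₁.le, ← Real.sq_sqrt hℓ₂.le, hsqe])
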